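/- For x, y ∈ (0,1), the five real numbers z₁ = x, z₂ = (1−x)/(1−xy), z₃ = (1−y)/(1−xy), z₄ = y, z₅ = 1−xy all lie in (0,1), and they satisfy 1 − zᵢ = z_{i−1}z_{i+1} for all i ∈ ℤ/5. -/

import Mathlib

/-!
The relations are the 5-periodic pentagon recurrence `z_{i+1} = (1 − zᵢ)/z_{i−1}` run from
`z₃ = y`, `z₄ = 1 − xy`, `z₀ = x`; each is a one-line field identity once `1 − xy ≠ 0`.
For the two quotients, `(1 − x)/(1 − xy) < 1` amounts to `xy < x`, i.e. `y < 1`.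
-/

/-- The explicit real 5-tuple `(x, (1−x)/(1−xy), (1−y)/(1−xy), y, 1−xy)`,
indexed by `ℤ/5`. -/
noncomputable def fiveTupleR (x y : ℝ) : ZMod 5 → ℝ := fun i =>
  if i = 0 then x
  else if i = 1 then (1 - x) / (1 - x * y)
  else if i = 2 then (1 - y) / (1 - x * y)
  else if i = 3 then y
  else 1 - x * y

open Set

lemma one_sub_mul_pos {x y : ℝ} (hx : x ∈ Ioo (0 : ℝ) 1) (hy : y ≤ 1) : 0 < 1 - x * y :=
  sub_pos.mpr (mul_lt_one_of_nonneg_of_lt_one_left hx.1.le hx.2 hy)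

lemma one_sub_div_one_sub_mul_mem_Ioo {x y : ℝ} (hx : x ∈ Ioo (0 : ℝ) 1) (hy : y < 1) :
    (1 - x) / (1 - x * y) ∈ Ioo (0 : ℝ) 1 := by
  have hd := one_sub_mul_pos hx hy.le
  refine ⟨div_pos (sub_pos.mpr hx.2) hd, (div_lt_one hd).mpr ?_⟩
  nlinarith [hx.1]

lemma fiveTupleR_mem_Ioo {x y : ℝ} (hx : x ∈ Ioo (0 : ℝ) 1) (hy : y ∈ Ioo (0 : ℝ) 1)
    (i : ZMod 5) : fiveTupleR x y i ∈ Ioo (0 : ℝ) 1 := by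
  fin_cases i
  · exact hx
  · exact one_sub_div_one_sub_mul_mem_Ioo hx hy.2
  · change (1 - y) / (1 - x * y) ∈ Ioo (0 : ℝ) 1
    rw [mul_comm x y]
    exact one_sub_div_one_sub_mul_mem_Ioo hy hx.2
  · exact hy
  · exact ⟨one_sub_mul_pos hx hy.2.le, sub_lt_self 1 (mul_pos hx.1 hy.1)⟩

lemma one_sub_fiveTupleR {x y : ℝ} (h : 1 - x * y ≠ 0) (i : ZMod 5) :
    1 - fiveTupleR x y i = fiveTupleR x y (i - 1) * fiveTupleR x y (i + 1) := by
  fin_cases i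
  · change 1 - x = (1 - x * y) * ((1 - x) / (1 - x * y))
    rw [mul_div_cancel₀ _ h]
  · change 1 - (1 - x) / (1 - x * y) = x * ((1 - y) / (1 - x * y))
    rw [one_sub_div h, mul_div_assoc']
    ring
  · change 1 - (1 - y) / (1 - x * y) = (1 - x) / (1 - x * y) * y
    rw [one_sub_div h, div_mul_eq_mul_div]
    ring
  · change 1 - y = (1 - y) / (1 - x * y) * (1 - x * y)
    rw [div_mul_cancel₀ _ h]
  · change 1 - (1 - x * y) = y * x
    ring

/-- For `x, y ∈ (0,1)` the five numbers `x, (1−x)/(1−xy), (1−y)/(1−xy), y, 1−xy`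
all lie in `(0,1)` and satisfy `1 − zᵢ = z_{i−1}z_{i+1}` for all `i ∈ ℤ/5`. -/
theorem five_tuple_in_Ioo_and_relations (x y : ℝ)
    (hx : x ∈ Set.Ioo (0 : ℝ) 1) (hy : y ∈ Set.Ioo (0 : ℝ) 1) :
    (∀ i : ZMod 5, fiveTupleR x y i ∈ Set.Ioo (0 : ℝ) 1) ∧
    (∀ i : ZMod 5,
      1 - fiveTupleR x y i = fiveTupleR x y (i - 1) * fiveTupleR x y (i + 1)) :=
  ⟨fiveTupleR_mem_Ioo hx hy, one_sub_fiveTupleR (one_sub_mul_pos hx hy.2.le).ne'⟩
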